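/- Fix τ ∈ ℂ. For a real parameter p > 2, let u(p) = exp(2πi/(3p)), α(p) = 2 − u(p)³ − conj(u(p))³ = 2 − 2cos(2π/p) > 0, β(p) = (conj(u(p))² − u(p))τ, and let H(p) be the 3×3 Hermitian matrix [[α(p), β(p), conj(β(p))], [conj(β(p)), α(p), β(p)], [β(p), conj(β(p)), α(p)]]. Then as p → +∞, the rescaled matrix α(p)^(−1/2) · H(p) converges (entrywise) to the matrix H∞ = [[0, −iτ, i·conj(τ)], [i·conj(τ), 0, −iτ], [−iτ, i·conj(τ), 0]]. -/

import Mathlib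

/-!
Put t = π/p. Then α(p) = 4 sin² t, so √α(p) = 2 sin t, and β(p) = (e^{-4it/3} − e^{2it/3}) τ.
Both numerator and denominator of β/√α vanish at t = 0, so as t → 0 the quotient tends to the
quotient of their derivatives, (−4i/3 − 2i/3) τ / 2 = −iτ; the diagonal entries α/√α = √α tend
to 0. Since H(p) and H∞ are circulant matrices, entrywise convergence reduces to that of their
first columns.
-/

open Matrix Filter

noncomputable section

/-- u(p) = exp(2πi/(3p)). -/
def uP (p : ℝ) : ℂ := Complex.exp (2 * Real.pi * Complex.I / (3 * p))

/-- α(p) = 2 − 2cos(2π/p), as a real number. -/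
def αP (p : ℝ) : ℝ := 2 - 2 * Real.cos (2 * Real.pi / p)

/-- β(p) = (conj(u(p))² − u(p))·τ. -/
def βP (τ : ℂ) (p : ℝ) : ℂ := ((starRingEnd ℂ (uP p)) ^ 2 - uP p) * τ

/-- The Hermitian matrix H(p). -/
def HP (τ : ℂ) (p : ℝ) : Matrix (Fin 3) (Fin 3) ℂ :=
  !![(αP p : ℂ), βP τ p, starRingEnd ℂ (βP τ p);
     starRingEnd ℂ (βP τ p), (αP p : ℂ), βP τ p;
     βP τ p, starRingEnd ℂ (βP τ p), (αP p : ℂ)]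

/-- The limiting Hermitian form H∞. -/
def Hinf (τ : ℂ) : Matrix (Fin 3) (Fin 3) ℂ :=
  !![0, -Complex.I * τ, Complex.I * starRingEnd ℂ τ;
     Complex.I * starRingEnd ℂ τ, 0, -Complex.I * τ;
     -Complex.I * τ, Complex.I * starRingEnd ℂ τ, 0]

open Topology

theorem HasDerivAt.tendsto_div_of_eq_zero {𝕜 𝕜' : Type*} [NontriviallyNormedField 𝕜]
    [NormedField 𝕜'] [NormedAlgebra 𝕜 𝕜'] {f g : 𝕜 → 𝕜'} {f' g' : 𝕜'} {a : 𝕜}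
    (hf : HasDerivAt f f' a) (hg : HasDerivAt g g' a) (hfa : f a = 0) (hga : g a = 0)
    (hg' : g' ≠ 0) :
    Tendsto (fun x => f x / g x) (𝓝[≠] a) (𝓝 (f' / g')) := by
  refine ((hasDerivAt_iff_tendsto_slope.1 hf).div (hasDerivAt_iff_tendsto_slope.1 hg) hg').congr' ?_
  filter_upwards [self_mem_nhdsWithin] with x hx
  have hxa : algebraMap 𝕜 𝕜' (x - a)⁻¹ ≠ 0 :=
    (map_ne_zero _).2 (inv_ne_zero (sub_ne_zero.2 hx))
  simp only [Pi.div_apply, slope_def_module, hfa, hga, sub_zero, Algebra.smul_def]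
  exact mul_div_mul_left _ _ hxa

theorem uP_pow_three (p : ℝ) : uP p ^ 3 = Complex.exp (↑(2 * Real.pi / p) * Complex.I) := by
  rw [uP, ← Complex.exp_nat_mul]
  push_cast
  ring_nf

theorem two_sub_uP_pow_three_sub_conj (p : ℝ) :
    2 - uP p ^ 3 - (starRingEnd ℂ (uP p)) ^ 3 = (αP p : ℂ) := by
  rw [← map_pow, uP_pow_three, ← Complex.exp_conj, map_mul, Complex.conj_ofReal, Complex.conj_I,
    mul_neg, ← neg_mul, αP, Complex.ofReal_sub, Complex.ofReal_mul, Complex.ofReal_cos,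
    Complex.ofReal_ofNat, Complex.two_cos]
  ring

theorem αP_eq_four_mul_sin_sq (p : ℝ) : αP p = 4 * Real.sin (Real.pi / p) ^ 2 := by
  rw [αP, mul_div_assoc, Real.cos_two_mul, Real.cos_sq']
  ring

theorem sqrt_αP {p : ℝ} (hp : 1 ≤ p) : √(αP p) = 2 * Real.sin (Real.pi / p) := by
  have hsin : 0 ≤ Real.sin (Real.pi / p) :=
    Real.sin_nonneg_of_nonneg_of_le_pi (by positivity) (div_le_self Real.pi_pos.le hp)
  rw [αP_eq_four_mul_sin_sq, show (4 : ℝ) = 2 ^ 2 by norm_num, ← mul_pow,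
    Real.sqrt_sq (by positivity)]

theorem αP_pos {p : ℝ} (hp : 1 < p) : 0 < αP p := by
  have hp0 : 0 < p := by linarith
  have hsin : 0 < Real.sin (Real.pi / p) :=
    Real.sin_pos_of_pos_of_lt_pi (by positivity) (div_lt_self Real.pi_pos hp)
  rw [αP_eq_four_mul_sin_sq]
  positivity

theorem tendsto_αP_atTop : Tendsto αP atTop (𝓝 0) := by
  have hcos : Tendsto (fun p : ℝ => Real.cos (2 * Real.pi / p)) atTop (𝓝 (Real.cos 0)) :=
    (Real.continuous_cos.tendsto 0).comp (tendsto_const_nhds.div_atTop tendsto_id)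
  have h := (hcos.const_mul 2).const_sub 2
  rwa [Real.cos_zero, mul_one, sub_self] at h

theorem βP_eq (τ : ℂ) (p : ℝ) :
    βP τ p = (Complex.exp (-(4 / 3 * Complex.I) * ↑(Real.pi / p))
      - Complex.exp (2 / 3 * Complex.I * ↑(Real.pi / p))) * τ := by
  have hu : uP p = Complex.exp (2 / 3 * Complex.I * ↑(Real.pi / p)) := by
    rw [uP]; push_cast; ring_nf
  rw [βP, hu, ← Complex.exp_conj, ← Complex.exp_nat_mul]
  simp only [map_mul, map_div₀, map_ofNat, Complex.conj_I, Complex.conj_ofReal]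
  ring_nf

theorem tendsto_exp_sub_exp_div_two_sin :
    Tendsto (fun t : ℝ => (Complex.exp (-(4 / 3 * Complex.I) * t)
      - Complex.exp (2 / 3 * Complex.I * t)) / ↑(2 * Real.sin t)) (𝓝[≠] 0) (𝓝 (-Complex.I)) := by
  have hexp (c : ℂ) : HasDerivAt (fun t : ℝ => Complex.exp (c * t)) c 0 := by
    simpa using ((hasDerivAt_id (0 : ℂ)).const_mul c).cexp.comp_ofReal
  have hsin : HasDerivAt (fun t : ℝ => ((2 * Real.sin t : ℝ) : ℂ)) 2 0 := by
    simpa using ((Real.hasDerivAt_sin 0).const_mul 2).ofReal_comp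
  have h := ((hexp (-(4 / 3 * Complex.I))).sub (hexp (2 / 3 * Complex.I))).tendsto_div_of_eq_zero
    hsin (by simp) (by simp) two_ne_zero
  rwa [show (-(4 / 3 * Complex.I) - 2 / 3 * Complex.I) / 2 = -Complex.I by ring] at h

theorem tendsto_inv_sqrt_αP_mul_βP (τ : ℂ) :
    Tendsto (fun p => (((√(αP p))⁻¹ : ℝ) : ℂ) * βP τ p) atTop (𝓝 (-Complex.I * τ)) := by
  have hπp : Tendsto (fun p : ℝ => Real.pi / p) atTop (𝓝[≠] 0) :=
    tendsto_nhdsWithin_of_tendsto_nhds_of_eventually_within _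
      (tendsto_const_nhds.div_atTop tendsto_id)
      (by filter_upwards [eventually_gt_atTop 0] with p hp using (by positivity : Real.pi / p ≠ 0))
  refine ((tendsto_exp_sub_exp_div_two_sin.comp hπp).mul_const τ).congr' ?_
  filter_upwards [eventually_ge_atTop 1] with p hp
  rw [sqrt_αP hp, βP_eq, Function.comp_apply, Complex.ofReal_inv]
  ring

theorem tendsto_inv_sqrt_αP_mul_αP :
    Tendsto (fun p => (((√(αP p))⁻¹ : ℝ) : ℂ) * αP p) atTop (𝓝 0) := by
  have h := tendsto_αP_atTop.sqrt.ofReal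
  rw [Real.sqrt_zero, Complex.ofReal_zero] at h
  refine h.congr fun p => ?_
  rw [← Complex.ofReal_mul, inv_mul_eq_div, Real.div_sqrt]

theorem tendsto_inv_sqrt_αP_mul_conj_βP (τ : ℂ) :
    Tendsto (fun p => (((√(αP p))⁻¹ : ℝ) : ℂ) * starRingEnd ℂ (βP τ p)) atTop
      (𝓝 (Complex.I * starRingEnd ℂ τ)) := by
  convert (Complex.continuous_conj.tendsto _).comp (tendsto_inv_sqrt_αP_mul_βP τ) using 2 <;>
    simp

theorem HP_eq_circulant (τ : ℂ) (p : ℝ) :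
    HP τ p = circulant ![(αP p : ℂ), starRingEnd ℂ (βP τ p), βP τ p] := by
  ext i j
  fin_cases i <;> fin_cases j <;> rfl

theorem Hinf_eq_circulant (τ : ℂ) :
    Hinf τ = circulant ![0, Complex.I * starRingEnd ℂ τ, -Complex.I * τ] := by
  ext i j
  fin_cases i <;> fin_cases j <;> rfl

theorem Matrix.continuous_circulant {n α : Type*} [Sub n] [TopologicalSpace α] :
    Continuous (circulant : (n → α) → Matrix n n α) :=
  continuous_pi fun _ => continuous_pi fun _ => continuous_apply _

/-- for p > 2 one has 2 − u(p)³ − conj(u(p))³ = 2 − 2cos(2π/p) > 0, and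
α(p)^(−1/2)·H(p) converges entrywise to H∞ as p → +∞. -/
theorem stmt_4 (τ : ℂ) :
    (∀ p : ℝ, 2 < p →
      (2 - uP p ^ 3 - (starRingEnd ℂ (uP p)) ^ 3 = (αP p : ℂ)) ∧ 0 < αP p) ∧
    Tendsto (fun p : ℝ => (((Real.sqrt (αP p))⁻¹ : ℝ) : ℂ) • HP τ p)
      atTop (nhds (Hinf τ)) := by
  refine ⟨fun p hp => ⟨two_sub_uP_pow_three_sub_conj p, αP_pos (by linarith)⟩, ?_⟩
  simp only [HP_eq_circulant, Hinf_eq_circulant, ← circulant_smul]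
  refine (continuous_circulant.tendsto _).comp (tendsto_pi_nhds.2 fun i => ?_)
  fin_cases i
  · exact tendsto_inv_sqrt_αP_mul_αP
  · exact tendsto_inv_sqrt_αP_mul_conj_βP τ
  · exact tendsto_inv_sqrt_αP_mul_βP τ

end
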